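/- Fix a ∈ ℝ with a ≠ −2. Let γ(u) = [[1, e^{2iu}],[e^{−2iu}, 1]], let L(u) = a·γ(u) − 2e₃ with e₃ = [[1,0],[0,−1]], and set Λ(u) = (1/2)(γ̇(u) − i·L(u)) ∈ M₂(ℂ). Then for every u ∈ ℝ: Λ₂₁(u) ≠ 0, Λ₂₁(u)γ₁₁(u) − Λ₁₁(u)γ₂₁(u) ≠ 0, and the Weierstrass data of the Björling problem are G(u) := Λ₁₁(u)/Λ₂₁(u) = ((a−2)/(a+2))·e^{2iu} and ω(u) := Λ₂₁(u)²/(Λ₂₁(u)γ₁₁(u) − Λ₁₁(u)γ₂₁(u)) = (−i(a+2)²/8)·e^{−2iu}. -/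

import Mathlib

open Matrix

/-- The elliptic circle in the light cone. -/
noncomputable def γE (u : ℝ) : Matrix (Fin 2) (Fin 2) ℂ :=
  !![1, Complex.exp (2 * Complex.I * u); Complex.exp (-(2 * Complex.I * u)), 1]

/-- Its derivative. -/
noncomputable def γEdot (u : ℝ) : Matrix (Fin 2) (Fin 2) ℂ :=
  !![0, 2 * Complex.I * Complex.exp (2 * Complex.I * u);
     -(2 * Complex.I) * Complex.exp (-(2 * Complex.I * u)), 0]

/-- e₃ = [[1,0],[0,−1]]. -/
noncomputable def e3 : Matrix (Fin 2) (Fin 2) ℂ := !![1, 0; 0, -1]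

/-- The prescribed tangent field L = aγ − 2e₃. -/
noncomputable def Lfield (a : ℝ) (u : ℝ) : Matrix (Fin 2) (Fin 2) ℂ :=
  (a : ℂ) • γE u - (2 : ℂ) • e3

/-- Λ = (1/2)(γ̇ − iL). -/
noncomputable def ΛE (a : ℝ) (u : ℝ) : Matrix (Fin 2) (Fin 2) ℂ :=
  (1 / 2 : ℂ) • (γEdot u - Complex.I • Lfield a u)

section

open Complex

theorem hasDerivAt_cexp_const_mul_ofReal (c : ℂ) (u : ℝ) :
    HasDerivAt (fun t : ℝ => exp (c * t)) (c * exp (c * u)) u := by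
  simpa [mul_comm] using (((hasDerivAt_id u).ofReal_comp).const_mul c).cexp

theorem hasDerivAt_γE_apply (u : ℝ) (i j : Fin 2) :
    HasDerivAt (fun t => γE t i j) (γEdot u i j) u := by
  fin_cases i <;> fin_cases j <;> simp only [γE, γEdot, of_apply, cons_val', cons_val_zero,
    cons_val_one, empty_val', cons_val_fin_one, Fin.zero_eta, Fin.mk_one]
  · exact hasDerivAt_const u 1
  · exact hasDerivAt_cexp_const_mul_ofReal (2 * I) u
  · simpa only [neg_mul] using hasDerivAt_cexp_const_mul_ofReal (-(2 * I)) u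
  · exact hasDerivAt_const u 1

theorem ΛE_apply (a u : ℝ) (i j : Fin 2) :
    ΛE a u i j = (γEdot u i j - I * (a * γE u i j - 2 * e3 i j)) / 2 := by
  simp only [ΛE, Lfield, Matrix.smul_apply, Matrix.sub_apply, smul_eq_mul]
  ring

theorem ΛE_zero_zero (a u : ℝ) : ΛE a u 0 0 = -I * (a - 2) / 2 := by
  simp only [ΛE_apply, γEdot, γE, e3, of_apply, cons_val', cons_val_zero, empty_val',
    cons_val_fin_one]
  ring

theorem ΛE_one_zero (a u : ℝ) : ΛE a u 1 0 = -I * (a + 2) / 2 * exp (-(2 * I * u)) := by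
  simp only [ΛE_apply, γEdot, γE, e3, of_apply, cons_val', cons_val_zero, cons_val_one,
    empty_val', cons_val_fin_one]
  ring

theorem ΛE_mul_γE_sub_ΛE_mul_γE (a u : ℝ) :
    ΛE a u 1 0 * γE u 0 0 - ΛE a u 0 0 * γE u 1 0 = -2 * I * exp (-(2 * I * u)) := by
  simp only [ΛE_zero_zero, ΛE_one_zero, γE, of_apply, cons_val', cons_val_zero, cons_val_one,
    empty_val', cons_val_fin_one]
  ring

end

theorem elliptic_catenoid_weierstrass_data (a : ℝ) (ha : a ≠ -2) (u : ℝ) :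
    (∀ i j : Fin 2, HasDerivAt (fun u' => γE u' i j) (γEdot u i j) u) ∧
    ΛE a u 1 0 ≠ 0 ∧
    ΛE a u 1 0 * γE u 0 0 - ΛE a u 0 0 * γE u 1 0 ≠ 0 ∧
    ΛE a u 0 0 / ΛE a u 1 0
      = (((a : ℂ) - 2) / ((a : ℂ) + 2)) * Complex.exp (2 * Complex.I * u) ∧
    ΛE a u 1 0 ^ 2 / (ΛE a u 1 0 * γE u 0 0 - ΛE a u 0 0 * γE u 1 0)
      = (-Complex.I * ((a : ℂ) + 2) ^ 2 / 8) * Complex.exp (-(2 * Complex.I * u)) := by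
  have ha' : (a : ℂ) + 2 ≠ 0 := by
    exact_mod_cast (fun h => ha (eq_neg_of_add_eq_zero_left h) : a + 2 ≠ 0)
  rw [ΛE_mul_γE_sub_ΛE_mul_γE, ΛE_zero_zero, ΛE_one_zero]
  refine ⟨hasDerivAt_γE_apply u, ?_, ?_, ?_, ?_⟩
  · simp [Complex.I_ne_zero, ha', Complex.exp_ne_zero]
  · simp [Complex.I_ne_zero, Complex.exp_ne_zero]
  · rw [Complex.exp_neg]
    field_simp
  · field_simp
    ring
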